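/- arXiv:1207.0935 — 2 statements merged into one kernel-verified Lean document; each statement's English description precedes it below -/
import Mathlib

section
/- Let F be a strategyproof 2-facility mechanism on the line with approximation ratio at most ρ for 3 agents. Suppose (i, a) has left-preferred agent j and finite left-threshold p. Then for any instance x with a = x_i < x_j < x_k and x_k − p > ρ·(p − x_i), F places a facility at x_j. -/
/-!
Move agent `j` from `x k` down to `x j`. At `x k` she coincides with `k`, so approximation opens a
facility there. After each step down, strategyproofness for `j` keeps a facility within one step
of her, and the threshold rule on left-well-separated instances forces that facility to sit
exactly at her, provided the steps are shorter than `(x j - x i) / (ρ + 3)` and never straddle `p`.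
-/
noncomputable section

/-- Cost of an agent at location `a` under a pair of facilities. -/
def fcost (a : ℝ) (y : ℝ × ℝ) : ℝ := min |a - y.1| |a - y.2|

/-- Social cost: sum of the agents' distances to their nearest facility. -/
def scost {n : ℕ} (x : Fin n → ℝ) (y : ℝ × ℝ) : ℝ := ∑ i, fcost (x i) y

/-- Optimal social cost over all placements of two facilities. -/
def optCost {n : ℕ} (x : Fin n → ℝ) : ℝ := ⨅ y : ℝ × ℝ, scost x y

/-- The mechanism outputs its facilities in increasing order. -/
def Ordered {n : ℕ} (F : (Fin n → ℝ) → ℝ × ℝ) : Prop := ∀ x, (F x).1 ≤ (F x).2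

/-- No agent can strictly decrease her cost by misreporting her location. -/
def Strategyproof {n : ℕ} (F : (Fin n → ℝ) → ℝ × ℝ) : Prop :=
  ∀ (x : Fin n → ℝ) (i : Fin n) (y : ℝ),
    fcost (x i) (F x) ≤ fcost (x i) (F (Function.update x i y))

/-- `F` has approximation ratio (at most) `ρ` for the social cost. -/
def ApproxRatio {n : ℕ} (F : (Fin n → ℝ) → ℝ × ℝ) (ρ : ℝ) : Prop :=
  ∀ x, scost x (F x) ≤ ρ * optCost x

/-- An `(i|j,k)`-well-separated 3-agent instance. -/
def WellSep (ρ : ℝ) (x : Fin 3 → ℝ) (i j k : Fin 3) : Prop :=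
  x i < x j ∧ x j < x k ∧ ρ * (x k - x j) < x j - x i

/-- An `i`-left-well-separated 3-agent instance: agent `i` is isolated on the
left of the two nearby agents `j` and `k`. -/
def LeftWS (ρ : ℝ) (x : Fin 3 → ℝ) (i j k : Fin 3) : Prop :=
  x i < min (x j) (x k) ∧
    ρ * (max (x j) (x k) - min (x j) (x k)) < min (x j) (x k) - x i

/-- The median of three reals. -/
def med3 (a b c : ℝ) : ℝ := max (min a b) (min (max a b) c)

open Function

lemma step_down_induction {P : ℝ → Prop} {t c D : ℝ} (hD : 0 < D) (htc : t ≤ c) (hc : P c)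
    (step : ∀ s s', t ≤ s → s ≤ s' → s' ≤ c → s' ≤ s + D → P s' → P s) : P t := by
  have key : ∀ n : ℕ, P (max t (c - n * D)) := by
    intro n
    induction n with
    | zero => simpa [max_eq_right htc] using hc
    | succ n ih =>
      have hnD : 0 ≤ n * D := by positivity
      push_cast at ih ⊢
      refine step _ _ (le_max_left _ _) (max_le_max le_rfl (by linarith)) (max_le htc (by linarith))
        (max_le ?_ ?_) ih
      · linarith [le_max_left t (c - (n + 1) * D)]
      · linarith [le_max_right t (c - (n + 1) * D)]
  obtain ⟨n, hn⟩ := exists_nat_ge ((c - t) / D)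
  have hcn : c - n * D ≤ t := by rw [div_le_iff₀ hD] at hn; linarith
  simpa [max_eq_left hcn] using key n

lemma step_down_induction_of_not_straddle {P : ℝ → Prop} {t c p D : ℝ} (hD : 0 < D)
    (htc : t ≤ c) (hpc : p ≤ c) (hc : P c)
    (step : ∀ s s', t ≤ s → s ≤ s' → s' ≤ c → s' ≤ s + D → (p ≤ s ∨ s' ≤ p) → P s' → P s) :
    P t := by
  have hmid : P (max t p) := step_down_induction hD (max_le htc hpc) hc
    fun s s' hs hss' hs'c hs'D =>
      step s s' (le_of_max_le_left hs) hss' hs'c hs'D (Or.inl (le_of_max_le_right hs))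
  refine step_down_induction hD (le_max_left t p) hmid
    fun s s' hs hss' hs'c hs'D => step s s' hs hss' (hs'c.trans (max_le htc hpc)) hs'D ?_
  rcases le_or_gt s' p with h | h
  · exact Or.inr h
  · exact Or.inl (h.le.trans (((le_max_iff.1 hs'c).resolve_right h.not_ge).trans hs))

lemma fcost_nonneg (u : ℝ) (Y : ℝ × ℝ) : 0 ≤ fcost u Y :=
  le_min (abs_nonneg _) (abs_nonneg _)

lemma fcost_le_iff {u e : ℝ} {Y : ℝ × ℝ} : fcost u Y ≤ e ↔ |u - Y.1| ≤ e ∨ |u - Y.2| ≤ e :=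
  min_le_iff

lemma fcost_le_abs_sub {u c : ℝ} {Y : ℝ × ℝ} (h : Y.1 = c ∨ Y.2 = c) : fcost u Y ≤ |u - c| := by
  rcases h with rfl | rfl
  exacts [min_le_left _ _, min_le_right _ _]

lemma fcost_eq_zero_iff {u : ℝ} {Y : ℝ × ℝ} : fcost u Y = 0 ↔ Y.1 = u ∨ Y.2 = u := by
  rw [le_antisymm_iff, and_iff_left (fcost_nonneg u Y), fcost_le_iff, abs_nonpos_iff,
    abs_nonpos_iff, sub_eq_zero, sub_eq_zero, eq_comm, @eq_comm _ u]

lemma sub_le_snd_of_fcost_le {u e : ℝ} {Y : ℝ × ℝ} (hY : Y.1 ≤ Y.2) (h : fcost u Y ≤ e) :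
    u - e ≤ Y.2 := by
  rcases fcost_le_iff.1 h with h | h <;> linarith [le_abs_self (u - Y.1), le_abs_self (u - Y.2)]

lemma fcost_le_scost {n : ℕ} (x : Fin n → ℝ) (Y : ℝ × ℝ) (m : Fin n) :
    fcost (x m) Y ≤ scost x Y :=
  Finset.single_le_sum (fun m _ => fcost_nonneg (x m) Y) (Finset.mem_univ m)

lemma optCost_le_scost {n : ℕ} (x : Fin n → ℝ) (Y : ℝ × ℝ) : optCost x ≤ scost x Y :=
  ciInf_le ⟨0, by rintro _ ⟨Y, rfl⟩; exact Finset.sum_nonneg fun m _ => fcost_nonneg _ _⟩ Y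

lemma scost_eq_add_add {x : Fin 3 → ℝ} {Y : ℝ × ℝ} {l m n : Fin 3}
    (hlm : l ≠ m) (hln : l ≠ n) (hmn : m ≠ n) :
    scost x Y = fcost (x l) Y + fcost (x m) Y + fcost (x n) Y := by
  fin_cases l <;> fin_cases m <;> fin_cases n <;>
    simp_all [scost, Fin.sum_univ_three] <;> ring

/-- Opening the facilities at `x l` and `x n` leaves only agent `m` unserved. -/
lemma optCost_le_abs_sub {x : Fin 3 → ℝ} {l m n : Fin 3}
    (hlm : l ≠ m) (hln : l ≠ n) (hmn : m ≠ n) : optCost x ≤ |x m - x n| := by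
  have hl : fcost (x l) (x l, x n) = 0 := fcost_eq_zero_iff.2 (Or.inl rfl)
  have hn : fcost (x n) (x l, x n) = 0 := fcost_eq_zero_iff.2 (Or.inr rfl)
  have hm : fcost (x m) (x l, x n) ≤ |x m - x n| := fcost_le_abs_sub (Or.inr rfl)
  have := optCost_le_scost x (x l, x n)
  rw [scost_eq_add_add hlm hln hmn] at this
  linarith

lemma ApproxRatio.fcost_le {n : ℕ} {F : (Fin n → ℝ) → ℝ × ℝ} {ρ : ℝ} (happ : ApproxRatio F ρ)
    (x : Fin n → ℝ) (q : Fin n) : fcost (x q) (F x) ≤ ρ * optCost x :=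
  (fcost_le_scost x (F x) q).trans (happ x)

/-- `(i, a)` has left-preferred agent `j` and left-threshold `p`, in the form given by the lemma on
`i`-left-well-separated instances. -/
def HasLeftThreshold (F : (Fin 3 → ℝ) → ℝ × ℝ) (ρ : ℝ) (i j k : Fin 3) (a p : ℝ) : Prop :=
  ∀ y : Fin 3 → ℝ, y i = a → LeftWS ρ y i j k →
    (p ≤ y j → (F y).2 = y j) ∧ (y j < p → (F y).2 = med3 p (y j) (y k))

lemma leftWS_of_abs_sub_lt {ρ : ℝ} (hρ : 0 ≤ ρ) {y : Fin 3 → ℝ} {i j k : Fin 3}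
    (h : (ρ + 1) * |y k - y j| < y j - y i) : LeftWS ρ y i j k := by
  have hmin : y j - |y k - y j| ≤ min (y j) (y k) :=
    le_min (by linarith [abs_nonneg (y k - y j)]) (by linarith [neg_abs_le (y k - y j)])
  have : 0 ≤ ρ * |y k - y j| := mul_nonneg hρ (abs_nonneg _)
  refine ⟨by linarith, ?_⟩
  rw [max_sub_min_eq_abs', abs_sub_comm]
  linarith

section Mechanism

variable {F : (Fin 3 → ℝ) → ℝ × ℝ} {ρ : ℝ}

lemma ApproxRatio.fcost_le_mul_abs_sub (happ : ApproxRatio F ρ) (hρ : 0 ≤ ρ)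
    {l m n : Fin 3} (hlm : l ≠ m) (hln : l ≠ n) (hmn : m ≠ n) (x : Fin 3 → ℝ) (q : Fin 3) :
    fcost (x q) (F x) ≤ ρ * |x m - x n| :=
  (happ.fcost_le x q).trans (mul_le_mul_of_nonneg_left (optCost_le_abs_sub hlm hln hmn) hρ)

lemma ApproxRatio.facility_of_eq (happ : ApproxRatio F ρ) (hρ : 0 ≤ ρ)
    {l m n : Fin 3} (hlm : l ≠ m) (hln : l ≠ n) (hmn : m ≠ n) {x : Fin 3 → ℝ}
    (h : x m = x n) : (F x).1 = x m ∨ (F x).2 = x m := by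
  refine fcost_eq_zero_iff.1 (le_antisymm ?_ (fcost_nonneg _ _))
  simpa [h] using happ.fcost_le_mul_abs_sub hρ hlm hln hmn x m

/-- Agent `m` could report `x n`, and then a facility would be opened there. -/
lemma Strategyproof.fcost_le_abs_sub (hsp : Strategyproof F) (happ : ApproxRatio F ρ)
    (hρ : 0 ≤ ρ) {l m n : Fin 3} (hlm : l ≠ m) (hln : l ≠ n) (hmn : m ≠ n) (x : Fin 3 → ℝ) :
    fcost (x m) (F x) ≤ |x m - x n| := by
  have hfac := happ.facility_of_eq hρ hlm hln hmn (x := update x m (x n))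
    (by rw [update_self, update_of_ne hmn.symm])
  rw [update_self] at hfac
  exact (hsp x m (x n)).trans (_root_.fcost_le_abs_sub hfac)

variable {i j k : Fin 3} {a p : ℝ}

namespace HasLeftThreshold

lemma snd_eq (hF : HasLeftThreshold F ρ i j k a p) {y : Fin 3 → ℝ} (hya : y i = a)
    (hws : LeftWS ρ y i j k) (hside : y k ≤ y j ∨ p ≤ y j) : (F y).2 = y j := by
  rcases le_or_gt p (y j) with hp | hp
  · exact (hF y hya hws).1 hp
  · rw [(hF y hya hws).2 hp, med3, min_eq_right hp.le, max_eq_left hp.le,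
      min_eq_right ((hside.resolve_right hp.not_ge).trans hp.le),
      max_eq_left (hside.resolve_right hp.not_ge)]

variable (hF : HasLeftThreshold F ρ i j k a p) (hρ : 0 ≤ ρ)
  (hsp : Strategyproof F) (happ : ApproxRatio F ρ) (hij : i ≠ j) (hik : i ≠ k) (hjk : j ≠ k)
include hF hρ hsp happ hij hik hjk

/-- If `F y` had a facility at `t ≠ y j` close to `y j`, then in the instance where `k` reports
`t` the threshold rule puts the right facility on `y j` and approximation puts the left one near
`a`; `k` would then be served at distance `|t - y j|` and gain by reporting `y k`. -/
lemma eq_of_facility_near {y : Fin 3 → ℝ} {t : ℝ} (hya : y i = a)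
    (hclose : (ρ + 2) * |t - y j| < y j - a) (hside : t ≤ y j ∨ p ≤ y j)
    (hfac : (F y).1 = t ∨ (F y).2 = t) : t = y j := by
  by_contra hne
  set Δ := |t - y j| with hΔ
  have hΔpos : 0 < Δ := abs_pos.2 (sub_ne_zero.2 hne)
  set w := update y k t with hw
  have hwi : w i = a := by rw [hw, update_of_ne hik, hya]
  have hwj : w j = y j := update_of_ne hjk _ _
  have hwk : w k = t := update_self _ _ _
  have hws : LeftWS ρ w i j k :=
    leftWS_of_abs_sub_lt hρ (by rw [hwi, hwj, hwk]; nlinarith)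
  have hsnd : (F w).2 = y j := by
    rw [← hwj]
    refine hF.snd_eq hwi hws ?_
    rw [hwj, hwk]
    exact hside.imp_left fun h => h.lt_of_ne hne |>.le
  have hfa : fcost a (F w) ≤ ρ * Δ := by
    simpa [hwi, hwj, hwk, hΔ] using happ.fcost_le_mul_abs_sub hρ hik hij hjk.symm w i
  have hfst : (F w).1 ≤ a + ρ * Δ := by
    rcases fcost_le_iff.1 hfa with h | h
    · linarith [neg_abs_le (a - (F w).1)]
    · rw [hsnd, abs_sub_comm] at h
      nlinarith [le_abs_self (y j - a)]
  have hcost : Δ ≤ fcost t (F w) := by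
    refine le_min ?_ (by rw [hsnd])
    linarith [le_abs_self (t - (F w).1), neg_abs_le (t - y j)]
  have hback : update w k (y k) = y := by rw [update_idem, update_eq_self]
  have := hsp w k (y k)
  rw [hback, hwk, fcost_eq_zero_iff.2 hfac] at this
  linarith

lemma facility_of_update (hord : Ordered F) {y : Fin 3 → ℝ} {s' : ℝ} (hya : y i = a)
    (hfar : ρ * (p - a) < y k - p) (hs' : y j ≤ s') (hclose : (ρ + 2) * (s' - y j) < y j - a)
    (hside : p ≤ y j ∨ s' ≤ p)
    (hfac : (F (update y j s')).1 = s' ∨ (F (update y j s')).2 = s') :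
    (F y).1 = y j ∨ (F y).2 = y j := by
  have hnear : fcost (y j) (F y) ≤ s' - y j := by
    have := (hsp y j s').trans (_root_.fcost_le_abs_sub hfac)
    rwa [abs_sub_comm, abs_of_nonneg (sub_nonneg.2 hs')] at this
  have haj : a < y j := by nlinarith
  obtain ⟨t, hft, hts, hside'⟩ : ∃ t, ((F y).1 = t ∨ (F y).2 = t) ∧ |t - y j| ≤ s' - y j ∧
      (t ≤ y j ∨ p ≤ y j) := by
    rcases le_or_gt p (y j) with hp | hp
    · rcases fcost_le_iff.1 hnear with h | h
      · exact ⟨_, Or.inl rfl, by rwa [abs_sub_comm], Or.inr hp⟩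
      · exact ⟨_, Or.inr rfl, by rwa [abs_sub_comm], Or.inr hp⟩
    -- Below the threshold, `y k` being far keeps the right facility beyond `p`, so the facility
    -- near `y j` is the left one; it lies left of `y j` because `i` is served within `y j - a`.
    have hs'p := hside.resolve_left hp.not_ge
    have hsnd : p < (F y).2 := by
      have hk := happ.fcost_le_mul_abs_sub hρ hjk.symm hik.symm hij.symm y k
      rw [hya, abs_of_pos (sub_pos.2 haj)] at hk
      have := sub_le_snd_of_fcost_le (hord y) hk
      nlinarith
    have hfst : (F y).1 ≤ y j := by
      have hi := hsp.fcost_le_abs_sub happ hρ hik.symm hjk.symm hij y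
      rw [hya, abs_sub_comm, abs_of_pos (sub_pos.2 haj)] at hi
      rcases fcost_le_iff.1 hi with h | h
      · linarith [neg_abs_le (a - (F y).1)]
      · linarith [neg_abs_le (a - (F y).2)]
    rcases fcost_le_iff.1 hnear with h | h
    · exact ⟨_, Or.inl rfl, by rwa [abs_sub_comm], Or.inl hfst⟩
    · linarith [neg_abs_le (y j - (F y).2)]
  have hclose' : (ρ + 2) * |t - y j| < y j - a :=
    (mul_le_mul_of_nonneg_left hts (by linarith)).trans_lt hclose
  rwa [← hF.eq_of_facility_near hρ hsp happ hij hik hjk hya hclose' hside' hft]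

end HasLeftThreshold

end Mechanism

theorem approx_lemma_general (F : (Fin 3 → ℝ) → ℝ × ℝ) (ρ : ℝ) (hρ : 1 ≤ ρ)
    (hord : Ordered F) (hsp : Strategyproof F) (happ : ApproxRatio F ρ)
    (i j k : Fin 3) (hij : i ≠ j) (hik : i ≠ k) (hjk : j ≠ k)
    (a p : ℝ)
    (hsep : ∀ y : Fin 3 → ℝ, y i = a → LeftWS ρ y i j k →
      (p ≤ y j → (F y).2 = y j) ∧ (y j < p → (F y).2 = med3 p (y j) (y k)))
    (x : Fin 3 → ℝ) (hxa : x i = a) (hxj : x i < x j) (hxk : x j < x k)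
    (hfar : ρ * (p - x i) < x k - p) :
    (F x).1 = x j ∨ (F x).2 = x j := by
  subst hxa
  have hρ0 : 0 ≤ ρ := zero_le_one.trans hρ
  have hpk : p ≤ x k := by
    rcases le_total p (x i) with h | h
    · linarith
    · nlinarith
  set D := (x j - x i) / (ρ + 3) with hD
  have hDpos : 0 < D := div_pos (by linarith) (by linarith)
  have hD3 : (ρ + 3) * D = x j - x i := by rw [hD]; field_simp
  let P (s : ℝ) : Prop := (F (update x j s)).1 = s ∨ (F (update x j s)).2 = s
  have hk : P (x k) := by
    have := happ.facility_of_eq hρ0 hij hik hjk (x := update x j (x k))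
      (by rw [update_self, update_of_ne hjk.symm])
    rwa [update_self] at this
  have := step_down_induction_of_not_straddle hDpos hxk.le hpk hk
    fun s s' hs hss' _ hs'D hside hs' => by
      have hclose : (ρ + 2) * (s' - s) < s - x i := by nlinarith
      have := HasLeftThreshold.facility_of_update hsep hρ0 hsp happ hij hik hjk hord
        (y := update x j s) (s' := s') (update_of_ne hij _ _)
        (by rwa [update_of_ne hjk.symm]) (by rwa [update_self]) (by rwa [update_self])
        (by rwa [update_self]) (by rwa [update_idem])
      rwa [update_self] at this
  simpa [P] using this

/-- Lemma `approx`: if `(i, a)` has left-preferred agent `j` and finite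
left-threshold `p`, then for any instance `x` with `a = x_i < x_j < x_k` and
`x_k − p > ρ(p − x_i)`, `F` places a facility at `x_j`. -/
theorem approx_lemma (F : (Fin 3 → ℝ) → ℝ × ℝ) (ρ : ℝ) (hρ : 1 ≤ ρ)
    (hord : Ordered F) (hsp : Strategyproof F) (happ : ApproxRatio F ρ)
    (i j k : Fin 3) (hij : i ≠ j) (hik : i ≠ k) (hjk : j ≠ k)
    (a p : ℝ) (hpa : a ≤ p)
    (hsep : ∀ y : Fin 3 → ℝ, y i = a → LeftWS ρ y i j k →
      (p ≤ y j → (F y).2 = y j) ∧ (y j < p → (F y).2 = med3 p (y j) (y k)))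
    (x : Fin 3 → ℝ) (hxa : x i = a) (hxj : x i < x j) (hxk : x j < x k)
    (hfar : ρ * (p - x i) < x k - p) :
    (F x).1 = x j ∨ (F x).2 = x j :=
  approx_lemma_general F ρ hρ hord hsp happ i j k hij hik hjk a p hsep x hxa hxj hxk hfar
end
end

section
/- Let F be a strategyproof 2-facility mechanism in the star metric S_3 with bounded approximation ratio ρ for 3-agent instances. For any 3-agent instance x in which all three agents lie on at most two branches of S_3, if a facility f of F(x) serves two agents j and k (i.e., f is the facility nearest to both x_j and x_k among the two facilities of F(x)), then f lies on the path segment [x_j, x_k] between the locations of j and k. -/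
noncomputable section

/-- A point of the star `S₃`: a distance `x ≥ 0` from the center together with
a branch label (points with `x = 0` all represent the common origin). -/
abbrev StarPt := NNReal × Fin 3

/-- The star (path) distance: `|x - x'|` on a common branch, `x + x'` across
branches. -/
def starDist (p q : StarPt) : ℝ :=
  if p.2 = q.2 then |(p.1 : ℝ) - (q.1 : ℝ)| else (p.1 : ℝ) + (q.1 : ℝ)

/-- Cost of an agent at `a` under a pair of facilities in `S₃`. -/
def sfcost (a : StarPt) (y : StarPt × StarPt) : ℝ :=
  min (starDist a y.1) (starDist a y.2)

/-- Social cost of a 3-agent instance in `S₃`. -/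
def sscost (x : Fin 3 → StarPt) (y : StarPt × StarPt) : ℝ := ∑ i, sfcost (x i) y

/-- Optimal social cost over all pairs of facility locations in `S₃`. -/
def soptCost (x : Fin 3 → StarPt) : ℝ := ⨅ y : StarPt × StarPt, sscost x y

/-- The interval `[u, v]` in the tree metric `S₃`: the points on the unique
path from `u` to `v`. -/
def seg (u v : StarPt) : Set StarPt :=
  {w | starDist u w + starDist w v = starDist u v}

/-!
Moving onto another agent's location is a possible misreport, and on the resulting instance a
mechanism of bounded ratio must put a facility there (the optimum is `0`); so by strategyproofness
every agent's cost is at most its distance to any other agent. For the facility `f` serving `j`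
and `k` this leaves only one configuration off `[x_j, x_k]`: `x_j` and `x_k` on two branches and
`f` at distance `r > 0` on the third. Let `k` misreport the midpoint `z` of `[O, f]`. Since `k`
may not gain, both new facilities stay at distance `≥ r` from `O`; yet the same bounds give each
of the points `a = z, x_j, x_i` (`i` the third agent) a facility within `|a| + r/2` of it, closer
than the route through `O`, hence one on the branch of `a`. Two facilities cover three branch
demands only if `x_i` is strictly on the branch of `x_j` or of `f`; swapping `j` and `k` puts it
strictly on the branch of `f`, a third branch in use.
-/

lemma starDist_nonneg (p q : StarPt) : 0 ≤ starDist p q := by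
  unfold starDist
  split_ifs <;> positivity

lemma starDist_self (p : StarPt) : starDist p p = 0 := by
  simp [starDist]

lemma starDist_comm (p q : StarPt) : starDist p q = starDist q p := by
  unfold starDist
  grind [abs_sub_comm]

lemma starDist_le_add (p q : StarPt) : starDist p q ≤ p.1 + q.1 := by
  unfold starDist
  split_ifs
  · exact (abs_sub _ _).trans (by simp)
  · rfl

lemma starDist_triangle (p q r : StarPt) :
    starDist p r ≤ starDist p q + starDist q r := by
  have := p.1.coe_nonneg; have := q.1.coe_nonneg; have := r.1.coe_nonneg
  unfold starDist
  split_ifs <;> grind [abs_sub_le, abs_le, le_abs_self, neg_abs_le]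

lemma pos_and_branch_eq_of_starDist_lt_add {p q : StarPt}
    (h : starDist p q < p.1 + q.1) : 0 < p.1 ∧ p.2 = q.2 := by
  have := q.1.coe_nonneg
  rw [← NNReal.coe_pos]
  unfold starDist at h
  split_ifs at h with hpq
  · exact ⟨by grind [abs_le, le_abs_self, neg_abs_le], hpq⟩
  · exact absurd h (lt_irrefl _)

lemma mem_seg_or_off_branches {u v f : StarPt} (hu : starDist u f ≤ starDist u v)
    (hv : starDist f v ≤ starDist u v) :
    f ∈ seg u v ∨ u.2 ≠ v.2 ∧ f.2 ≠ u.2 ∧ f.2 ≠ v.2 ∧ 0 < f.1 := by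
  have := u.1.coe_nonneg; have := v.1.coe_nonneg; have := f.1.coe_nonneg
  rw [← NNReal.coe_pos]
  simp only [seg, Set.mem_ofPred_eq, starDist] at *
  split_ifs at * <;> grind [abs_le, le_abs_self, neg_abs_le]

lemma sfcost_le_starDist_of_mem {a w : StarPt} {y : StarPt × StarPt}
    (hw : w = y.1 ∨ w = y.2) : sfcost a y ≤ starDist a w := by
  rcases hw with rfl | rfl
  exacts [min_le_left _ _, min_le_right _ _]

lemma exists_starDist_eq_sfcost (a : StarPt) (y : StarPt × StarPt) :
    ∃ w, (w = y.1 ∨ w = y.2) ∧ starDist a w = sfcost a y := by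
  rcases min_choice (starDist a y.1) (starDist a y.2) with h | h
  exacts [⟨y.1, .inl rfl, h.symm⟩, ⟨y.2, .inr rfl, h.symm⟩]

lemma sfcost_nonneg (a : StarPt) (y : StarPt × StarPt) : 0 ≤ sfcost a y :=
  le_min (starDist_nonneg _ _) (starDist_nonneg _ _)

lemma sfcost_eq_zero_of_mem {a : StarPt} {y : StarPt × StarPt} (ha : a = y.1 ∨ a = y.2) :
    sfcost a y = 0 :=
  le_antisymm ((sfcost_le_starDist_of_mem ha).trans_eq (starDist_self a)) (sfcost_nonneg a y)

lemma sfcost_le_starDist_of_sfcost_eq_zero {a b : StarPt} {y : StarPt × StarPt}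
    (hb : sfcost b y = 0) : sfcost a y ≤ starDist a b := by
  obtain ⟨w, hw, hbw⟩ := exists_starDist_eq_sfcost b y
  calc sfcost a y ≤ starDist a w := sfcost_le_starDist_of_mem hw
    _ ≤ starDist a b + starDist b w := starDist_triangle a b w
    _ = starDist a b := by rw [hbw, hb, add_zero]

lemma sscost_nonneg (x : Fin 3 → StarPt) (y : StarPt × StarPt) : 0 ≤ sscost x y :=
  Finset.sum_nonneg fun _ _ => sfcost_nonneg _ _

lemma soptCost_eq_zero_of_eq {x : Fin 3 → StarPt} {a b : Fin 3} (hab : a ≠ b)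
    (h : x a = x b) : soptCost x = 0 := by
  obtain ⟨c, hca, hcb⟩ := Fin.exists_ne_and_ne_of_two_lt a b (by norm_num)
  have hcover : ∀ i, x i = x a ∨ x i = x c := by
    intro i
    rcases (by omega : i = a ∨ i = b ∨ i = c) with rfl | rfl | rfl <;> simp [h]
  have hzero : sscost x (x a, x c) = 0 :=
    Finset.sum_eq_zero fun i _ => sfcost_eq_zero_of_mem (hcover i)
  refine le_antisymm ?_ (le_ciInf (sscost_nonneg x))
  exact hzero ▸ ciInf_le ⟨0, Set.forall_mem_range.2 (sscost_nonneg x)⟩ _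

lemma eq_or_eq_of_mem_pair {α : Type*} {y : α × α} {u v w : α} (hw : w = y.1 ∨ w = y.2)
    (hu : u = y.1 ∨ u = y.2) (hv : v = y.1 ∨ v = y.2) (huv : u ≠ v) : w = u ∨ w = v := by
  rcases hu with rfl | rfl <;> rcases hv with rfl | rfl <;> rcases hw with rfl | rfl <;> simp_all

def IsStrategyproof (F : (Fin 3 → StarPt) → StarPt × StarPt) : Prop :=
  ∀ (x : Fin 3 → StarPt) (i : Fin 3) (y : StarPt),
    sfcost (x i) (F x) ≤ sfcost (x i) (F (Function.update x i y))

def HasApproxRatio (F : (Fin 3 → StarPt) → StarPt × StarPt) (ρ : ℝ) : Prop :=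
  ∀ x : Fin 3 → StarPt, sscost x (F x) ≤ ρ * soptCost x

section Mechanism

variable {F : (Fin 3 → StarPt) → StarPt × StarPt} {ρ : ℝ}

lemma HasApproxRatio.sfcost_eq_zero (happ : HasApproxRatio F ρ) {x : Fin 3 → StarPt}
    {a b : Fin 3} (hab : a ≠ b) (h : x a = x b) : sfcost (x a) (F x) = 0 := by
  have hsum : sscost x (F x) ≤ 0 := by
    simpa [soptCost_eq_zero_of_eq hab h] using happ x
  have hle : sfcost (x a) (F x) ≤ sscost x (F x) :=
    Finset.single_le_sum (f := fun i => sfcost (x i) (F x))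
      (fun i _ => sfcost_nonneg _ _) (Finset.mem_univ a)
  exact le_antisymm (hle.trans hsum) (sfcost_nonneg _ _)

lemma sfcost_le_starDist (hsp : IsStrategyproof F) (happ : HasApproxRatio F ρ)
    (x : Fin 3 → StarPt) {a b : Fin 3} (hab : a ≠ b) :
    sfcost (x a) (F x) ≤ starDist (x a) (x b) := by
  have hpin := happ.sfcost_eq_zero (x := Function.update x a (x b)) hab
    (by simp [Function.update_of_ne hab.symm])
  rw [Function.update_self] at hpin
  exact (hsp x a (x b)).trans (sfcost_le_starDist_of_sfcost_eq_zero hpin)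

lemma pos_and_branch_eq_of_facility_off_branches (hsp : IsStrategyproof F)
    (happ : HasApproxRatio F ρ) (x : Fin 3 → StarPt) {j k : Fin 3} (hjk : j ≠ k)
    {f : StarPt} (hf : f = (F x).1 ∨ f = (F x).2)
    (hfk : starDist (x k) f = sfcost (x k) (F x))
    (hf_offj : f.2 ≠ (x j).2) (hf_offk : f.2 ≠ (x k).2) (hr : 0 < f.1) :
    ∀ i ≠ k, 0 < (x i).1 ∧ ((x i).2 = (x j).2 ∨ (x i).2 = f.2) := by
  intro i hik
  have hr' : (0 : ℝ) < f.1 := hr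
  set z : StarPt := (f.1 / 2, f.2)
  set V := Function.update x k z
  have hfar : ∀ w, w = (F V).1 ∨ w = (F V).2 → (f.1 : ℝ) ≤ w.1 := by
    intro w hw
    have hsp_k : sfcost (x k) (F x) ≤ sfcost (x k) (F V) := hsp x k z
    have hkf : starDist (x k) f = (x k).1 + f.1 := if_neg fun h => hf_offk h.symm
    linarith [sfcost_le_starDist_of_mem (a := x k) hw, starDist_le_add (x k) w]
  have hnear : ∀ a : StarPt, sfcost a (F V) ≤ a.1 + f.1 / 2 →
      ∃ w, (w = (F V).1 ∨ w = (F V).2) ∧ 0 < a.1 ∧ a.2 = w.2 := by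
    intro a ha
    obtain ⟨w, hw, haw⟩ := exists_starDist_eq_sfcost a (F V)
    have := hfar w hw
    exact ⟨w, hw, pos_and_branch_eq_of_starDist_lt_add (by linarith)⟩
  have hagent : ∀ l, l ≠ k → sfcost (x l) (F V) ≤ (x l).1 + f.1 / 2 := by
    intro l hlk
    have := sfcost_le_starDist hsp happ V hlk
    simp only [V, Function.update_of_ne hlk, Function.update_self] at this
    exact this.trans ((starDist_le_add _ _).trans (by simp [z]))
  have hz : sfcost z (F V) ≤ z.1 + f.1 / 2 := by
    have hback := hsp V k (x k)
    simp only [V, Function.update_self, Function.update_idem, Function.update_eq_self] at hback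
    refine hback.trans ((sfcost_le_starDist_of_mem hf).trans ?_)
    have hzf : starDist z f = f.1 / 2 := by
      simp only [z, starDist, if_true, NNReal.coe_div, NNReal.coe_ofNat]
      rw [abs_of_nonpos (by linarith)]
      ring
    simp [hzf]
  obtain ⟨wz, hwz, -, hbz⟩ := hnear z hz
  obtain ⟨wj, hwj, -, hbj⟩ := hnear (x j) (hagent j hjk)
  obtain ⟨wi, hwi, hpos, hbi⟩ := hnear (x i) (hagent i hik)
  refine ⟨hpos, ?_⟩
  have hzj : wz ≠ wj := fun h => hf_offj (hbz.trans ((congrArg Prod.snd h).trans hbj.symm))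
  rcases eq_or_eq_of_mem_pair hwi hwz hwj hzj with rfl | rfl
  exacts [.inr (hbi.trans hbz.symm), .inl (hbi.trans hbj.symm)]

end Mechanism

theorem tree_collinear_general (F : (Fin 3 → StarPt) → StarPt × StarPt)
    (ρ : ℝ)
    (hsp : ∀ (x : Fin 3 → StarPt) (i : Fin 3) (y : StarPt),
      sfcost (x i) (F x) ≤ sfcost (x i) (F (Function.update x i y)))
    (happ : ∀ x : Fin 3 → StarPt, sscost x (F x) ≤ ρ * soptCost x)
    (x : Fin 3 → StarPt)
    (hcol : ∃ b1 b2 : Fin 3, ∀ a : Fin 3,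
      (x a).1 = 0 ∨ (x a).2 = b1 ∨ (x a).2 = b2)
    (j k : Fin 3) (hjk : j ≠ k) (f : StarPt)
    (hf : f = (F x).1 ∨ f = (F x).2)
    (hfj : starDist (x j) f = sfcost (x j) (F x))
    (hfk : starDist (x k) f = sfcost (x k) (F x)) :
    f ∈ seg (x j) (x k) := by
  have hj := hfj ▸ sfcost_le_starDist hsp happ x hjk
  have hk := hfk ▸ sfcost_le_starDist hsp happ x hjk.symm
  rw [starDist_comm (x k), starDist_comm (x k)] at hk
  rcases mem_seg_or_off_branches hj hk with hmem | ⟨hjk_br, hf_offj, hf_offk, hr⟩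
  · exact hmem
  obtain ⟨i, hij, hik⟩ := Fin.exists_ne_and_ne_of_two_lt j k (by norm_num)
  have onJ := pos_and_branch_eq_of_facility_off_branches hsp happ x hjk hf hfk hf_offj hf_offk hr
  have onK := pos_and_branch_eq_of_facility_off_branches hsp happ x hjk.symm hf hfj hf_offk hf_offj hr
  obtain ⟨hj0, -⟩ := onJ j hjk
  obtain ⟨hk0, -⟩ := onK k hjk.symm
  obtain ⟨hi0, hiJ⟩ := onJ i hik
  obtain ⟨-, hiK⟩ := onK i hij
  obtain ⟨b1, b2, hb⟩ := hcol
  have := hb i; have := hb j; have := hb k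
  grind

/-- Proposition `tree-collinear`: for a strategyproof `ρ`-approximate
2-facility mechanism in `S₃` with 3 agents, on any instance where all agents
lie on at most two branches, a facility serving two agents `j` and `k` (i.e.,
nearest to both of them among the two facilities) lies on the path segment
between their locations. -/
theorem tree_collinear (F : (Fin 3 → StarPt) → StarPt × StarPt)
    (ρ : ℝ) (hρ : 1 ≤ ρ)
    (hsp : ∀ (x : Fin 3 → StarPt) (i : Fin 3) (y : StarPt),
      sfcost (x i) (F x) ≤ sfcost (x i) (F (Function.update x i y)))
    (happ : ∀ x : Fin 3 → StarPt, sscost x (F x) ≤ ρ * soptCost x)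
    (x : Fin 3 → StarPt)
    (hcol : ∃ b1 b2 : Fin 3, ∀ a : Fin 3,
      (x a).1 = 0 ∨ (x a).2 = b1 ∨ (x a).2 = b2)
    (j k : Fin 3) (hjk : j ≠ k) (f : StarPt)
    (hf : f = (F x).1 ∨ f = (F x).2)
    (hfj : starDist (x j) f = sfcost (x j) (F x))
    (hfk : starDist (x k) f = sfcost (x k) (F x)) :
    f ∈ seg (x j) (x k) :=
  tree_collinear_general F ρ hsp happ x hcol j k hjk f hf hfj hfk
end
end
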